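/- Let ℓ : ℝ³ → ℝ be convex, differentiable, and symmetric (invariant under all permutations of its three arguments), and define g : (0,∞)³ → ℝ by g(λ₁, λ₂, λ₃) = ℓ(log λ₁, log λ₂, log λ₃). Then g satisfies the Baker–Ericksen inequalities: for all (λ₁, λ₂, λ₃) ∈ (0,∞)³ and all i ≠ j, (λᵢ·∂g/∂λᵢ(λ) − λⱼ·∂g/∂λⱼ(λ))·(λᵢ − λⱼ) ≥ 0. -/
import Mathlib


open Real

/-- Convex, differentiable, symmetric isotropic functions of the logarithmic strain
satisfy the Baker–Ericksen inequalities: if `ℓ : ℝ³ → ℝ` is convex, differentiable and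
invariant under permutations of its arguments, and `g(λ) = ℓ(log λ₁, log λ₂, log λ₃)`,
then `(λᵢ·∂g/∂λᵢ − λⱼ·∂g/∂λⱼ)·(λᵢ − λⱼ) ≥ 0` for all `i ≠ j`. -/
theorem convex_log_satisfies_BakerEricksen (ℓ : (Fin 3 → ℝ) → ℝ)
    (hconv : ConvexOn ℝ Set.univ ℓ) (hdiff : Differentiable ℝ ℓ)
    (hsymm : ∀ (σ : Equiv.Perm (Fin 3)) (x : Fin 3 → ℝ), ℓ (x ∘ σ) = ℓ x)
    (lam : Fin 3 → ℝ) (hlam : ∀ i, 0 < lam i) (i j : Fin 3) (hij : i ≠ j) :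
    0 ≤ (lam i * deriv (fun s : ℝ =>
            ℓ (fun m => Real.log (Function.update lam i s m))) (lam i)
        - lam j * deriv (fun s : ℝ =>
            ℓ (fun m => Real.log (Function.update lam j s m))) (lam j))
      * (lam i - lam j) := by
  set y : Fin 3 → ℝ := fun m => Real.log (lam m) with hy
  -- Step 1: lamₖ · ∂ₖ g = ∂ₖ ℓ at y
  have key : ∀ k : Fin 3, lam k * deriv (fun s : ℝ =>
      ℓ (fun m => Real.log (Function.update lam k s m))) (lam k)
      = fderiv ℝ ℓ y (Pi.single k 1) := by
    intro k
    have hfun : (fun s : ℝ => ℓ (fun m => Real.log (Function.update lam k s m)))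
        = fun s => ℓ (Function.update y k (Real.log s)) := by
      funext s; congr 1; funext m
      by_cases hm : m = k
      · subst hm; simp
      · simp [Function.update_of_ne hm, hy]
    have h1 : HasDerivAt (fun u : ℝ => ℓ (Function.update y k u))
        (fderiv ℝ ℓ y (Pi.single k 1)) (y k) := by
      have hF : HasFDerivAt ℓ (fderiv ℝ ℓ y) (Function.update y k (y k)) := by
        rw [Function.update_eq_self]; exact (hdiff y).hasFDerivAt
      exact hF.comp_hasDerivAt (y k) (hasDerivAt_update y k (y k))
    have hlog : HasDerivAt Real.log (lam k)⁻¹ (lam k) :=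
      Real.hasDerivAt_log (hlam k).ne'
    have h2 : HasDerivAt (fun s : ℝ => ℓ (Function.update y k (Real.log s)))
        (fderiv ℝ ℓ y (Pi.single k 1) * (lam k)⁻¹) (lam k) := by
      have : y k = Real.log (lam k) := rfl
      exact HasDerivAt.comp (lam k) (this ▸ h1) hlog
    rw [hfun, h2.deriv, mul_comm ((fderiv ℝ ℓ y) (Pi.single k 1)), ← mul_assoc,
      mul_inv_cancel₀ (hlam k).ne', one_mul]
  rw [key i, key j]
  -- Step 2: the symmetric convexity argument
  set d : Fin 3 → ℝ := Pi.single i 1 - Pi.single j 1 with hd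
  set c : ℝ := (y i + y j) / 2 with hc
  set mid : Fin 3 → ℝ := Function.update (Function.update y i c) j c with hmid
  set t₀ : ℝ := (y i - y j) / 2 with ht₀
  have hmidi : mid i = c := by
    rw [hmid, Function.update_of_ne hij, Function.update_self]
  have hmidj : mid j = c := by rw [hmid, Function.update_self]
  have hmidk : ∀ k, k ≠ i → k ≠ j → mid k = y k := by
    intro k hki hkj
    rw [hmid, Function.update_of_ne hkj, Function.update_of_ne hki]
  have hdi : d i = 1 := by simp [hd, Pi.single_apply, hij]
  have hdj : d j = -1 := by simp [hd, Pi.single_apply, hij.symm]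
  have hdk : ∀ k, k ≠ i → k ≠ j → d k = 0 := by
    intro k hki hkj; simp [hd, Pi.single_apply, hki, hkj]
  have hyeq : y = mid + t₀ • d := by
    funext k
    by_cases hki : k = i
    · subst hki; simp [hmidi, hdi, hc, ht₀]; ring
    · by_cases hkj : k = j
      · subst hkj; simp [hmidj, hdj, hc, ht₀]; ring
      · simp [hmidk k hki hkj, hdk k hki hkj]
  have heven : ∀ t : ℝ, ℓ (mid + (-t) • d) = ℓ (mid + t • d) := by
    intro t
    have hcomp : ((mid + t • d) ∘ (Equiv.swap i j)) = mid + (-t) • d := by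
      funext k
      by_cases hki : k = i
      · subst hki
        simp only [Function.comp_apply, Equiv.swap_apply_left, Pi.add_apply, Pi.smul_apply,
          smul_eq_mul, hmidi, hmidj, hdi, hdj]
        ring
      · by_cases hkj : k = j
        · subst hkj
          simp only [Function.comp_apply, Equiv.swap_apply_right, Pi.add_apply, Pi.smul_apply,
            smul_eq_mul, hmidi, hmidj, hdi, hdj]
          ring
        · simp only [Function.comp_apply, Equiv.swap_apply_of_ne_of_ne hki hkj, Pi.add_apply,
            Pi.smul_apply, smul_eq_mul, hdk k hki hkj]
          ring
    rw [← hcomp, hsymm]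
  -- the 1-D function h
  set h : ℝ → ℝ := fun t => ℓ (mid + t • d) with hh
  have hconvh : ConvexOn ℝ Set.univ h := by
    have := hconv.comp_affineMap (AffineMap.lineMap mid (mid + d) : ℝ →ᵃ[ℝ] (Fin 3 → ℝ))
    have heq : (ℓ ∘ (AffineMap.lineMap mid (mid + d) : ℝ →ᵃ[ℝ] (Fin 3 → ℝ))) = h := by
      funext t
      simp [hh, AffineMap.lineMap_apply, add_comm]
    rw [heq] at this
    simpa using this
  have hderivh : ∀ t : ℝ, HasDerivAt h (fderiv ℝ ℓ (mid + t • d) d) t := by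
    intro t
    have hin : HasDerivAt (fun t : ℝ => mid + t • d) d t := by
      simpa using ((hasDerivAt_id t).smul_const d).const_add mid
    exact (hdiff (mid + t • d)).hasFDerivAt.comp_hasDerivAt t hin
  have hA : HasDerivAt h (fderiv ℝ ℓ y d) t₀ := by
    have := hderivh t₀; rwa [← hyeq] at this
  set A : ℝ := fderiv ℝ ℓ y d with hAdef
  have hkey : 0 ≤ t₀ * A := by
    rcases lt_trichotomy t₀ 0 with hlt | heq0 | hgt
    · have hs : h t₀ = h (-t₀) := by
        have := heven (-t₀); simp only [neg_neg] at this
        exact this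
      have hle : A ≤ slope h t₀ (-t₀) :=
        hconvh.le_slope_of_hasDerivAt (Set.mem_univ _) (Set.mem_univ _)
          (by linarith) hA
      have hs0 : slope h t₀ (-t₀) = 0 := by
        rw [slope_def_field]; rw [← hs]; simp
      have : A ≤ 0 := by rwa [hs0] at hle
      nlinarith
    · simp [heq0]
    · have hs : h (-t₀) = h t₀ := by simpa [hh] using heven t₀
      have hle : slope h (-t₀) t₀ ≤ A :=
        hconvh.slope_le_of_hasDerivAt (Set.mem_univ _) (Set.mem_univ _)
          (by linarith) hA
      have hs0 : slope h (-t₀) t₀ = 0 := by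
        rw [slope_def_field]; rw [hs]; simp
      have : 0 ≤ A := by rwa [hs0] at hle
      nlinarith
  -- Step 3: conclude
  have hGd : fderiv ℝ ℓ y (Pi.single i 1) - fderiv ℝ ℓ y (Pi.single j 1) = A := by
    rw [hAdef, hd, map_sub]
  rw [hGd]
  rcases lt_trichotomy (lam i) (lam j) with hlt | heq' | hgt
  · have hylt : y i < y j := Real.log_lt_log (hlam i) hlt
    have ht0 : t₀ < 0 := by rw [ht₀]; linarith
    have hAle : A ≤ 0 := nonpos_of_mul_nonneg_right hkey ht0
    nlinarith
  · simp [heq']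
  · have hygt : y j < y i := Real.log_lt_log (hlam j) hgt
    have ht0 : 0 < t₀ := by rw [ht₀]; linarith
    have hAge : 0 ≤ A := nonneg_of_mul_nonneg_right hkey ht0
    have := mul_nonneg hAge (by linarith : (0:ℝ) ≤ lam i - lam j)
    linarith
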